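/- Under the hypotheses of the propagation-of-regularity lemma (ℱ uniformly locally Lipschitz and uniformly linearly bounded, boundary estimate T(z) ≤ C₀ ω(d(z,𝒯)) near each point of ∂𝒯), one has lim_{x → x₀} T(x) = +∞ for every x₀ ∈ ∂ℛ, where ℛ = { x : T(x) < ∞ }. -/

import Mathlib

open Metric Set Filter
open scoped ENNReal Topology

/-- Reachability relation for a family `F` of vector fields: `Reach F x t z` holds iff there
is a concatenation of integral curves of fields in `F`, of total duration `t ≥ 0`,
going from `x` to `z`. -/
inductive Reach {n : ℕ} (F : Set (EuclideanSpace ℝ (Fin n) → EuclideanSpace ℝ (Fin n))) :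
    EuclideanSpace ℝ (Fin n) → ℝ → EuclideanSpace ℝ (Fin n) → Prop
  | refl (x : EuclideanSpace ℝ (Fin n)) : Reach F x 0 x
  | step {x z w : EuclideanSpace ℝ (Fin n)} {t s : ℝ} (h : Reach F x t z)
      {f : EuclideanSpace ℝ (Fin n) → EuclideanSpace ℝ (Fin n)} (hf : f ∈ F) (hs : 0 ≤ s)
      (y : ℝ → EuclideanSpace ℝ (Fin n)) (h0 : y 0 = z)
      (hy : ∀ u ∈ Set.Icc (0 : ℝ) s, HasDerivAt y (f (y u)) u)
      (hw : y s = w) : Reach F x (t + s) w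

/-- The minimum time function to reach the target `T` by `F`-trajectories (`+∞` if
the target cannot be reached). -/
noncomputable def minTime {n : ℕ}
    (F : Set (EuclideanSpace ℝ (Fin n) → EuclideanSpace ℝ (Fin n)))
    (T : Set (EuclideanSpace ℝ (Fin n))) (x : EuclideanSpace ℝ (Fin n)) : ℝ≥0∞ :=
  sInf (ENNReal.ofReal '' {r : ℝ | 0 ≤ r ∧ ∃ z ∈ T, Reach F x r z})

/-- A modulus: nonnegative, nondecreasing, with ω(0+) = 0. -/
def IsModulus (ω : ℝ → ℝ) : Prop :=
  (∀ r, 0 ≤ ω r) ∧ Monotone ω ∧ Tendsto ω (𝓝[>] (0 : ℝ)) (𝓝 0)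

/-- Uniform local Lipschitz continuity of a family of vector fields. -/
def UnifLocLipschitz {n : ℕ}
    (F : Set (EuclideanSpace ℝ (Fin n) → EuclideanSpace ℝ (Fin n))) : Prop :=
  ∀ K : Set (EuclideanSpace ℝ (Fin n)), Bornology.IsBounded K →
    ∃ L : NNReal, ∀ f ∈ F, LipschitzOnWith L f K

/-- Uniform linear growth bound for a family of vector fields. -/
def UnifLinBounded {n : ℕ}
    (F : Set (EuclideanSpace ℝ (Fin n) → EuclideanSpace ℝ (Fin n))) : Prop :=
  ∃ C : ℝ, 0 ≤ C ∧ ∀ f ∈ F, ∀ x, ‖f x‖ ≤ C * (‖x‖ + 1)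

/-! If the minimum time stayed below some `N` at points `x` arbitrarily close to `x₀ ∈ ∂ℛ`, each
such `x` would reach `𝒯` in time less than `N + 1` along a trajectory that, by the linear growth
bound, stays in a fixed ball. The boundary estimate puts `𝒯` inside the interior of `ℛ`, so by
compactness some `η`-neighbourhood of the part of `𝒯` inside that ball lies in `ℛ`. Cut off
outside a large cube, the fields become globally Lipschitz and bounded, so from every start point
`δ`-close to `x` (with `δ` independent of `x`) the same sequence of fields can be followed, and by
Gronwall's inequality the new trajectory ends within `η` of `𝒯`. Hence a ball around `x₀` lies in
`ℛ`, which contradicts `x₀ ∈ ∂ℛ`. -/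

open scoped NNReal
open Real

section ODE

variable {E : Type*} [NormedAddCommGroup E] [NormedSpace ℝ E]

theorem exists_forall_mem_Icc_hasDerivAt_of_lipschitzWith [CompleteSpace E] {v : E → E}
    {K : ℝ≥0} (hv : LipschitzWith K v) (hb : Bornology.IsBounded (range v)) (x₀ : E)
    {s : ℝ} (hs : 0 ≤ s) :
    ∃ g : ℝ → E, g 0 = x₀ ∧ ∀ t ∈ Icc 0 s, HasDerivAt g (v (g t)) t := by
  obtain ⟨M, hM⟩ := isBounded_iff_forall_norm_le.1 hb
  set M' : ℝ≥0 := M.toNNReal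
  have hM' : ∀ x, ‖v x‖ ≤ M' := fun x ↦ (hM _ (mem_range_self x)).trans (le_max_left _ _)
  have hpl : IsPicardLindelof (fun _ ↦ v) (tmin := -1) (tmax := s + 1)
      ⟨0, by constructor <;> linarith⟩ x₀ (M' * (s + 1).toNNReal) 0 M' K :=
    .of_time_independent (fun x _ ↦ hM' x) hv.lipschitzOnWith (by
      rw [max_eq_left (by linarith)]
      simp [Real.coe_toNNReal _ (by linarith : (0 : ℝ) ≤ s + 1)])
  obtain ⟨g, hg0, hg⟩ := hpl.exists_eq_forall_mem_Icc_hasDerivWithinAt₀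
  refine ⟨g, hg0, fun t ht ↦ ?_⟩
  have ht' : t ∈ Ioo (-1) (s + 1) := ⟨by linarith [ht.1], by linarith [ht.2]⟩
  exact (hg t (Ioo_subset_Icc_self ht')).hasDerivAt (Icc_mem_nhds ht'.1 ht'.2)

theorem norm_add_one_le_of_hasDerivAt {v : E → E} {C : ℝ} (hC : 0 < C)
    (hv : ∀ x, ‖v x‖ ≤ C * (‖x‖ + 1)) {y : ℝ → E} {s : ℝ}
    (hy : ∀ t ∈ Icc 0 s, HasDerivAt y (v (y t)) t) {t : ℝ} (ht : t ∈ Icc 0 s) :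
    ‖y t‖ + 1 ≤ (‖y 0‖ + 1) * exp (C * t) := by
  have hb := norm_le_gronwallBound_of_norm_deriv_right_le (K := C) (ε := C)
    (fun u hu ↦ (hy u hu).continuousAt.continuousWithinAt)
    (fun u hu ↦ (hy u (Ico_subset_Icc_self hu)).hasDerivWithinAt) le_rfl
    (fun u _ ↦ (hv (y u)).trans_eq (mul_add_one C _)) t ht
  rw [gronwallBound_of_K_ne_0 hC.ne', div_self hC.ne', sub_zero] at hb
  linarith

theorem exists_hasDerivAt_dist_le_of_eqOn [CompleteSpace E] {f v : E → E} {L : ℝ≥0}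
    (hv : LipschitzWith L v) (hvb : Bornology.IsBounded (range v)) {ρ : ℝ}
    (hvf : EqOn v f (closedBall 0 ρ)) {y : ℝ → E} {s : ℝ} (hs : 0 ≤ s)
    (hy : ∀ t ∈ Icc 0 s, HasDerivAt y (f (y t)) t) (hyρ : ∀ t ∈ Icc 0 s, ‖y t‖ + 1 ≤ ρ)
    {x : E} {δ : ℝ} (hx : dist x (y 0) ≤ δ) (hδ : δ * exp (L * s) ≤ 1) :
    ∃ g : ℝ → E, g 0 = x ∧ (∀ t ∈ Icc 0 s, HasDerivAt g (f (g t)) t) ∧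
      dist (g s) (y s) ≤ δ * exp (L * s) := by
  obtain ⟨g, hg0, hg⟩ := exists_forall_mem_Icc_hasDerivAt_of_lipschitzWith hv hvb x hs
  have hyv : ∀ t ∈ Icc 0 s, HasDerivAt y (v (y t)) t := fun t ht ↦ by
    rw [hvf (mem_closedBall_zero_iff.2 (by linarith [hyρ t ht]))]
    exact hy t ht
  have hdist : ∀ t ∈ Icc 0 s, dist (g t) (y t) ≤ δ * exp (L * t) := by
    simpa using dist_le_of_trajectories_ODE (v := fun _ ↦ v) (fun _ ↦ hv)
      (fun t ht ↦ (hg t ht).continuousAt.continuousWithinAt)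
      (fun t ht ↦ (hg t (Ico_subset_Icc_self ht)).hasDerivWithinAt)
      (fun t ht ↦ (hyv t ht).continuousAt.continuousWithinAt)
      (fun t ht ↦ (hyv t (Ico_subset_Icc_self ht)).hasDerivWithinAt) (by rwa [hg0])
  refine ⟨g, hg0, fun t ht ↦ ?_, hdist s ⟨hs, le_rfl⟩⟩
  have hgy : dist (g t) (y t) ≤ 1 := (hdist t ht).trans <| hδ.trans' <|
    mul_le_mul_of_nonneg_left (exp_le_exp.2 (by gcongr; exact ht.2)) (dist_nonneg.trans hx)
  have hgρ : ‖g t‖ ≤ ρ := by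
    linarith [norm_le_insert' (g t) (y t), dist_eq_norm (g t) (y t), hyρ t ht]
  rw [← hvf (mem_closedBall_zero_iff.2 hgρ)]
  exact hg t ht

end ODE

theorem LipschitzOnWith.isBounded_image {α β : Type*} [PseudoMetricSpace α]
    [PseudoMetricSpace β] {K : ℝ≥0} {f : α → β} {s : Set α} (hf : LipschitzOnWith K f s)
    (hs : Bornology.IsBounded s) : Bornology.IsBounded (f '' s) := by
  obtain ⟨C, hC⟩ := isBounded_iff.1 hs
  refine isBounded_iff.2 ⟨K * C, ?_⟩
  rintro _ ⟨a, ha, rfl⟩ _ ⟨b, hb, rfl⟩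
  exact (hf.dist_le_mul a ha b hb).trans (by gcongr; exact hC ha hb)

section CubeClamp

variable {ι : Type*} [Fintype ι]

def cubeClamp (R : ℝ) (x : EuclideanSpace ℝ ι) : EuclideanSpace ℝ ι :=
  WithLp.toLp 2 fun i ↦ max (min (x i) R) (-R)

theorem lipschitzWith_cubeClamp (R : ℝ) : LipschitzWith 1 (cubeClamp (ι := ι) R) := by
  refine LipschitzWith.of_dist_le_mul fun x y ↦ ?_
  rw [EuclideanSpace.dist_eq, EuclideanSpace.dist_eq, NNReal.coe_one, one_mul]
  gcongr with i
  simp only [cubeClamp, Real.dist_eq]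
  exact (abs_max_sub_max_le_abs _ _ _).trans
    (by simpa using abs_min_sub_min_le_max (x i) R (y i) R)

theorem cubeClamp_eq_self {R : ℝ} {x : EuclideanSpace ℝ ι} (hx : ‖x‖ ≤ R) :
    cubeClamp R x = x := by
  ext i
  have hxi := abs_le.1 ((PiLp.norm_apply_le x i).trans hx)
  simp [cubeClamp, min_eq_left hxi.2, max_eq_left hxi.1]

theorem isBounded_range_cubeClamp (R : ℝ) :
    Bornology.IsBounded (range (cubeClamp (ι := ι) R)) := by
  refine ((PiLp.lipschitzWith_toLp 2 _).isBounded_image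
    (isBounded_closedBall (x := 0) (r := |R|))).subset ?_
  rintro _ ⟨x, rfl⟩
  refine ⟨_, mem_closedBall_zero_iff.2
    ((pi_norm_le_iff_of_nonneg (abs_nonneg R)).2 fun i ↦ ?_), rfl⟩
  rw [Real.norm_eq_abs, abs_le]
  exact ⟨(neg_le_neg (le_abs_self R)).trans (le_max_right _ _),
    max_le ((min_le_right _ _).trans (le_abs_self R)) (neg_le_abs R)⟩

theorem LipschitzOnWith.exists_lipschitzWith_isBounded_eqOn
    {f : EuclideanSpace ℝ ι → EuclideanSpace ℝ ι} {L : ℝ≥0} {R : ℝ}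
    (hf : LipschitzOnWith L f (range (cubeClamp R))) :
    ∃ v, LipschitzWith L v ∧ Bornology.IsBounded (range v) ∧ EqOn v f (closedBall 0 R) := by
  refine ⟨f ∘ cubeClamp R, ?_, ?_, fun x hx ↦ ?_⟩
  · simpa using hf.comp (lipschitzWith_cubeClamp R).lipschitzOnWith
      (s := univ) fun x _ ↦ mem_range_self x
  · rw [range_comp]
    exact hf.isBounded_image (isBounded_range_cubeClamp R)
  · simp [cubeClamp_eq_self (mem_closedBall_zero_iff.1 hx)]

end CubeClamp

section Reachability

variable {n : ℕ} {F : Set (EuclideanSpace ℝ (Fin n) → EuclideanSpace ℝ (Fin n))}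
  {x z w : EuclideanSpace ℝ (Fin n)} {t s : ℝ}

namespace Reach

theorem nonneg (h : Reach F x t z) : 0 ≤ t := by
  induction h with
  | refl => exact le_rfl
  | step _ _ hs _ _ _ _ ih => exact add_nonneg ih hs

theorem trans (h₁ : Reach F x t z) (h₂ : Reach F z s w) : Reach F x (t + s) w := by
  induction h₂ with
  | refl => simpa using h₁
  | step _ hf hs y h0 hy hw ih => simpa only [add_assoc] using ih.step hf hs y h0 hy hw

theorem norm_add_one_le {C : ℝ} (hC : 0 < C) (hF : ∀ f ∈ F, ∀ x, ‖f x‖ ≤ C * (‖x‖ + 1))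
    (h : Reach F x t z) : ‖z‖ + 1 ≤ (‖x‖ + 1) * exp (C * t) := by
  induction h with
  | refl => simp
  | @step z w t s _ f hf hs y h0 hy hw ih =>
    have hy := norm_add_one_le_of_hasDerivAt hC (hF f hf) hy (right_mem_Icc.2 hs)
    rw [h0, hw] at hy
    calc ‖w‖ + 1 ≤ (‖z‖ + 1) * exp (C * s) := hy
      _ ≤ (‖x‖ + 1) * exp (C * t) * exp (C * s) := by gcongr
      _ = (‖x‖ + 1) * exp (C * (t + s)) := by rw [mul_add, exp_add, mul_assoc]

theorem exists_reach_dist_le {C ρ : ℝ} {L : ℝ≥0} (hC : 0 < C)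
    (hF : ∀ f ∈ F, ∀ x, ‖f x‖ ≤ C * (‖x‖ + 1))
    (hL : ∀ f ∈ F, LipschitzOnWith L f (range (cubeClamp ρ))) (h : Reach F x t z)
    (hρ : (‖x‖ + 1) * exp (C * t) + 1 ≤ ρ) {x' : EuclideanSpace ℝ (Fin n)} {δ : ℝ}
    (hx' : dist x' x ≤ δ) (hδ : δ * exp (L * t) ≤ 1) :
    ∃ w, Reach F x' t w ∧ dist w z ≤ δ * exp (L * t) := by
  induction h with
  | refl => exact ⟨x', .refl x', by simpa using hx'⟩
  | @step z w t s hxz f hf hs y h0 hy hw ih =>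
    have hδ0 : 0 ≤ δ := dist_nonneg.trans hx'
    obtain ⟨w', hx'w', hw'z⟩ := ih
      (hρ.trans' (by gcongr; linarith)) (hδ.trans' (by gcongr; linarith))
    have hyρ : ∀ u ∈ Icc 0 s, ‖y u‖ + 1 ≤ ρ := fun u hu ↦ by
      have hyu := norm_add_one_le_of_hasDerivAt hC (hF f hf) hy hu
      rw [h0] at hyu
      calc ‖y u‖ + 1 ≤ (‖z‖ + 1) * exp (C * u) := hyu
        _ ≤ (‖x‖ + 1) * exp (C * t) * exp (C * u) := by
          gcongr; exact hxz.norm_add_one_le hC hF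
        _ = (‖x‖ + 1) * exp (C * (t + u)) := by rw [mul_add, exp_add, mul_assoc]
        _ ≤ (‖x‖ + 1) * exp (C * (t + s)) := by gcongr; exact hu.2
        _ ≤ ρ := by linarith
    obtain ⟨v, hvL, hvb, hvf⟩ := (hL f hf).exists_lipschitzWith_isBounded_eqOn
    have hexp : δ * exp (L * (t + s)) = δ * exp (L * t) * exp (L * s) := by
      rw [mul_add, exp_add, mul_assoc]
    obtain ⟨g, hg0, hg, hgy⟩ := exists_hasDerivAt_dist_le_of_eqOn hvL hvb hvf hs hy hyρ
      (x := w') (δ := δ * exp (L * t)) (by rwa [h0]) (by rwa [← hexp])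
    exact ⟨g s, hx'w'.step hf hs g hg0 hg rfl, by rwa [hexp, ← hw]⟩

end Reach

variable {T : Set (EuclideanSpace ℝ (Fin n))}

theorem minTime_ne_top_iff :
    minTime F T x ≠ ⊤ ↔ ∃ r, 0 ≤ r ∧ ∃ z ∈ T, Reach F x r z := by
  simp [minTime, ← lt_top_iff_ne_top]

theorem exists_reach_of_minTime_lt {τ : ℝ} (h : minTime F T x < ENNReal.ofReal τ) :
    ∃ r < τ, ∃ z ∈ T, Reach F x r z := by
  obtain ⟨_, ⟨r, ⟨hr0, hr⟩, rfl⟩, hrτ⟩ := sInf_lt_iff.1 h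
  exact ⟨r, (ENNReal.ofReal_lt_ofReal_iff_of_nonneg hr0).1 hrτ, hr⟩

theorem minTime_ne_top_of_reach (h : Reach F x t z) (hz : minTime F T z ≠ ⊤) :
    minTime F T x ≠ ⊤ := by
  obtain ⟨r, hr0, w, hwT, hzw⟩ := minTime_ne_top_iff.1 hz
  exact minTime_ne_top_iff.2 ⟨t + r, add_nonneg h.nonneg hr0, w, hwT, h.trans hzw⟩

end Reachability

section ControllableSet

variable {n : ℕ} {F : Set (EuclideanSpace ℝ (Fin n) → EuclideanSpace ℝ (Fin n))}
  {T : Set (EuclideanSpace ℝ (Fin n))}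

theorem subset_interior_setOf_minTime_ne_top
    (hT : ∀ x₀ ∈ frontier T, ∀ᶠ z in 𝓝 x₀, minTime F T z ≠ ⊤) :
    T ⊆ interior {x | minTime F T x ≠ ⊤} := by
  intro z hz
  by_cases hzi : z ∈ interior T
  · exact interior_mono (fun x hx ↦ minTime_ne_top_iff.2 ⟨0, le_rfl, x, hx, .refl x⟩) hzi
  · exact mem_interior_iff_mem_nhds.2 (hT z ⟨subset_closure hz, hzi⟩)

theorem exists_ball_subset_setOf_minTime_ne_top (hTcl : IsClosed T)
    (hLip : UnifLocLipschitz F) (hLin : UnifLinBounded F)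
    (hT : T ⊆ interior {x | minTime F T x ≠ ⊤}) (c τ : ℝ) :
    ∃ δ > 0, ∀ x, ‖x‖ ≤ c → minTime F T x < ENNReal.ofReal τ →
      ball x δ ⊆ {x | minTime F T x ≠ ⊤} := by
  obtain ⟨C, hC0, hCF⟩ := hLin
  have hF : ∀ f ∈ F, ∀ x, ‖f x‖ ≤ (C + 1) * (‖x‖ + 1) := fun f hf x ↦
    (hCF f hf x).trans (by gcongr; linarith)
  set R := (c + 1) * exp ((C + 1) * τ)
  obtain ⟨L, hL⟩ := hLip _ (isBounded_range_cubeClamp (R + 1))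
  obtain ⟨η, hη, hηT⟩ := ((isCompact_closedBall 0 R).inter_left hTcl)
    |>.exists_thickening_subset_open isOpen_interior (inter_subset_left.trans hT)
  refine ⟨min 1 (η / 2) / exp (L * τ), by positivity, fun x hxc hxτ x' hx' ↦ ?_⟩
  obtain ⟨r, hrτ, z, hzT, hxz⟩ := exists_reach_of_minTime_lt hxτ
  have hxR : (‖x‖ + 1) * exp ((C + 1) * r) ≤ R := by
    have hc : 0 ≤ c + 1 := by linarith [norm_nonneg x]
    simp only [R]
    gcongr
  have hδ : min 1 (η / 2) / exp (L * τ) * exp (L * r) ≤ min 1 (η / 2) := by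
    rw [div_mul_eq_mul_div, div_le_iff₀ (exp_pos _)]
    gcongr
  obtain ⟨w, hx'w, hwz⟩ := hxz.exists_reach_dist_le (by linarith) hF hL (by linarith)
    (mem_ball.1 hx').le (hδ.trans (min_le_left _ _))
  have hzR : z ∈ T ∩ closedBall 0 R := ⟨hzT, mem_closedBall_zero_iff.2 <| by
    linarith [hxz.norm_add_one_le (by linarith) hF]⟩
  have hw : w ∈ thickening η (T ∩ closedBall 0 R) := mem_thickening_iff.2
    ⟨z, hzR, by linarith [min_le_right 1 (η / 2)]⟩
  exact minTime_ne_top_of_reach hx'w (interior_subset (hηT hw))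

end ControllableSet

theorem stmt_7_general {n : ℕ} (F : Set (EuclideanSpace ℝ (Fin n) → EuclideanSpace ℝ (Fin n)))
    (T : Set (EuclideanSpace ℝ (Fin n))) (hTcl : IsClosed T)
    (hLip : UnifLocLipschitz F) (hLin : UnifLinBounded F)
    (ω : ℝ → ℝ)
    (hbnd : ∀ x₀ ∈ frontier T, ∃ W ∈ 𝓝 x₀, ∃ C₀ : ℝ, 0 ≤ C₀ ∧
      ∀ z ∈ W, minTime F T z ≠ ⊤ ∧
        (minTime F T z).toReal ≤ C₀ * ω (infDist z T)) :
    ∀ x₀ ∈ frontier {x | minTime F T x ≠ ⊤},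
      Tendsto (minTime F T) (𝓝 x₀) (𝓝 (⊤ : ℝ≥0∞)) := by
  have hT : T ⊆ interior {x | minTime F T x ≠ ⊤} :=
    subset_interior_setOf_minTime_ne_top fun x₀ hx₀ ↦ by
      obtain ⟨W, hW, _, _, hWT⟩ := hbnd x₀ hx₀
      filter_upwards [hW] with z hz using (hWT z hz).1
  intro x₀ hx₀
  refine ENNReal.tendsto_nhds_top_iff_nnreal.2 fun N ↦ ?_
  by_contra hN
  obtain ⟨δ, hδ, hball⟩ :=
    exists_ball_subset_setOf_minTime_ne_top hTcl hLip hLin hT (‖x₀‖ + 1) (N + 1)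
  obtain ⟨x, hxN, hx⟩ :=
    ((not_eventually.1 hN).and_eventually (ball_mem_nhds x₀ (lt_min hδ one_pos))).exists
  have hxτ : minTime F T x < ENNReal.ofReal (N + 1) := by
    refine (not_lt.1 hxN).trans_lt ?_
    rw [ENNReal.ofReal_add N.coe_nonneg zero_le_one, ENNReal.ofReal_coe_nnreal, ENNReal.ofReal_one]
    exact ENNReal.lt_add_right ENNReal.coe_ne_top one_ne_zero
  have hxc : ‖x‖ ≤ ‖x₀‖ + 1 := by
    linarith [norm_le_insert' x x₀, dist_eq_norm x x₀, mem_ball.1 hx, min_le_right δ 1]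
  refine hx₀.2 (interior_mono (hball x hxc hxτ) ?_)
  rw [isOpen_ball.interior_eq, mem_ball_comm]
  exact ball_subset_ball (min_le_left δ 1) hx

/-- under the hypotheses of the propagation-of-regularity lemma
(ℱ uniformly locally Lipschitz and uniformly linearly bounded, boundary estimate
T(z) ≤ C₀ ω(d(z,𝒯)) near each point of ∂𝒯), the minimum time blows up at every point of
the boundary of the controllable set ℛ = {x : T(x) < ∞}. -/
theorem stmt_7 {n : ℕ} (F : Set (EuclideanSpace ℝ (Fin n) → EuclideanSpace ℝ (Fin n)))
    (T : Set (EuclideanSpace ℝ (Fin n))) (hTcl : IsClosed T)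
    (hLip : UnifLocLipschitz F) (hLin : UnifLinBounded F)
    (ω : ℝ → ℝ) (hω : IsModulus ω)
    (hbnd : ∀ x₀ ∈ frontier T, ∃ W ∈ 𝓝 x₀, ∃ C₀ : ℝ, 0 ≤ C₀ ∧
      ∀ z ∈ W, minTime F T z ≠ ⊤ ∧
        (minTime F T z).toReal ≤ C₀ * ω (infDist z T)) :
    ∀ x₀ ∈ frontier {x | minTime F T x ≠ ⊤},
      Tendsto (minTime F T) (𝓝 x₀) (𝓝 (⊤ : ℝ≥0∞)) :=
  stmt_7_general F T hTcl hLip hLin ω hbnd
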